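/- Let s = (s₁,s₂,s₃) ∈ ℝ³ with s₁,s₂,s₃ > 0, and suppose p_r(s) ≥ 0 for all r = 1,2,3. Then the symmetric matrix M₂₄(s, a⁰(s)) is positive semidefinite. -/

import Mathlib

open Matrix

/-- `S(s) = 2(s₁s₂+s₁s₃+s₂s₃) - (s₁²+s₂²+s₃²)`. -/
noncomputable def Spoly (s : Fin 3 → ℝ) : ℝ :=
  2 * (s 0 * s 1 + s 0 * s 2 + s 1 * s 2) - (s 0 ^ 2 + s 1 ^ 2 + s 2 ^ 2)

/-- `p_r(s) = (s_{r+1}-s_{r+2})² + 2 s_r (s_{r+1}+s_{r+2}) - 3 s_r²`, indices mod 3. -/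
noncomputable def ppoly (s : Fin 3 → ℝ) (r : Fin 3) : ℝ :=
  (s (r + 1) - s (r + 2)) ^ 2 + 2 * s r * (s (r + 1) + s (r + 2)) - 3 * s r ^ 2

/-- `a_r⁰(s) = ((s_{r+1}-s_{r+2})² - s_r²)/(2 s_r)`, indices mod 3. -/
noncomputable def a0 (s : Fin 3 → ℝ) (r : Fin 3) : ℝ :=
  ((s (r + 1) - s (r + 2)) ^ 2 - s r ^ 2) / (2 * s r)

/-- First block of the modified curvature operator of `(W²⁴, g_s)`. -/
noncomputable def M24 (s a : Fin 3 → ℝ) : Matrix (Fin 3) (Fin 3) ℝ :=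
  !![4 * s 0,                   Spoly s / s 2 - 2 * a 2,  Spoly s / s 1 - 2 * a 1;
     Spoly s / s 2 - 2 * a 2,   4 * s 1,                  Spoly s / s 0 - 2 * a 0;
     Spoly s / s 1 - 2 * a 1,   Spoly s / s 0 - 2 * a 0,  4 * s 2]

/-!
Summing the three `p_r` gives `S = p₁ + p₂ + p₃ ≥ 0`. At `a = a⁰(s)` the matrix factors as
`s₁s₂s₃ · M₂₄(s, a⁰(s)) = ℓ ℓᵀ + S · s sᵀ` with `ℓ_r = s_r (s_r - s_{r+1} - s_{r+2})`,
a nonnegative combination of rank-one positive semidefinite matrices.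
-/

theorem Spoly_eq_sum_ppoly (s : Fin 3 → ℝ) : Spoly s = ∑ r, ppoly s r := by
  simp only [Fin.sum_univ_three, ppoly, Spoly, Fin.reduceAdd]
  ring

theorem Matrix.posSemidef_vecMulVec_self_add_smul {n : Type*} [Fintype n] (u v : n → ℝ) {t : ℝ}
    (ht : 0 ≤ t) : (vecMulVec u u + t • vecMulVec v v).PosSemidef :=
  (posSemidef_vecMulVec_self_star u).add ((posSemidef_vecMulVec_self_star v).smul ht)

noncomputable def ell (s : Fin 3 → ℝ) (r : Fin 3) : ℝ :=
  s r * (s r - s (r + 1) - s (r + 2))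

theorem M24_a0_eq (s : Fin 3 → ℝ) (hs : ∀ r, s r ≠ 0) :
    M24 s (a0 s) = (s 0 * s 1 * s 2)⁻¹ • (vecMulVec (ell s) (ell s) + Spoly s • vecMulVec s s) := by
  have := hs 0; have := hs 1; have := hs 2
  ext i j
  fin_cases i <;> fin_cases j <;>
    · simp only [M24, a0, ell, Spoly, vecMulVec, smul_of, of_add_of, of_apply, Matrix.smul_apply,
        Pi.add_apply, Pi.smul_apply, smul_eq_mul, cons_val', cons_val, cons_val_zero, cons_val_one,
        cons_val_fin_one, Fin.isValue, Fin.reduceAdd, Fin.mk_one, Fin.reduceFinMk, Fin.zero_eta]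
      field_simp
      ring

theorem M24_posSemidef (s : Fin 3 → ℝ) (hs : ∀ r, 0 < s r)
    (hp : ∀ r, 0 ≤ ppoly s r) : (M24 s (a0 s)).PosSemidef := by
  have hS : 0 ≤ Spoly s := Spoly_eq_sum_ppoly s ▸ Finset.sum_nonneg fun r _ => hp r
  rw [M24_a0_eq s fun r => (hs r).ne']
  exact (posSemidef_vecMulVec_self_add_smul _ _ hS).smul
    (inv_nonneg.2 (mul_pos (mul_pos (hs 0) (hs 1)) (hs 2)).le)
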